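/- Let k be a commutative ring, G a group, V = V₀ ⊕ V₁ a ℤ/2ℤ-graded k-module, γ : G × G → kˣ, ξ : G → ℤ/2ℤ a group homomorphism, and ρ_V : G → GL(V) a projective representation with multiplier γ such that ρ_V(g)(V_i) ⊆ V_{i+ξ(g)} for all g ∈ G and i ∈ ℤ/2ℤ. Let ρ(g) : V ⊗_k V → V ⊗_k V be the k-linear map determined by ρ(g)(u ⊗ v) = (−1)^{ξ(g)·j}·(ρ_V(g)u) ⊗ (ρ_V(g)v) for u ∈ V and homogeneous v ∈ V_j, and let τ : V ⊗_k V → V ⊗_k V be the signed transposition determined by τ(u ⊗ v) = (−1)^{i·j}·v ⊗ u for homogeneous u ∈ V_i and v ∈ V_j. Then ρ(g) ∘ τ = (−1)^{ξ(g)}·(τ ∘ ρ(g)) for all g ∈ G. -/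

import Mathlib

open scoped TensorProduct

theorem neg_one_pow_zmod_two_val_add {R : Type*} [Ring R] (a b : ZMod 2) :
    (-1 : R) ^ (a + b).val = (-1) ^ a.val * (-1) ^ b.val := by
  rw [ZMod.val_add, ← neg_one_pow_eq_pow_mod_two, pow_add]

/-- Exponent bookkeeping behind `ρ(g) ∘ τ = (−1)^e (τ ∘ ρ(g))` on `V_i ⊗ V_j`, where `e = ξ(g)`. -/
theorem koszul_exponent_identity (i j e : ZMod 2) :
    i * j + e * i = e + (e * j + (i + e) * (j + e)) := by
  revert i j e
  decide

section Ext

variable {R M N P ι κ : Type*} [CommSemiring R] [AddCommMonoid M] [AddCommMonoid N]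
  [AddCommMonoid P] [Module R M] [Module R N] [Module R P]

theorem LinearMap.ext_of_iSup_eq_top {p : ι → Submodule R M} (hp : ⨆ i, p i = ⊤)
    {f g : M →ₗ[R] P} (h : ∀ i, ∀ x ∈ p i, f x = g x) : f = g := by
  have hle : ⊤ ≤ LinearMap.eqLocus f g := hp ▸ iSup_le fun i => LinearMap.le_eqLocus.mpr (h i)
  exact LinearMap.ext fun x => hle Submodule.mem_top

theorem TensorProduct.ext_of_iSup_eq_top {p : ι → Submodule R M} {q : κ → Submodule R N}
    (hp : ⨆ i, p i = ⊤) (hq : ⨆ j, q j = ⊤) {f g : M ⊗[R] N →ₗ[R] P}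
    (h : ∀ i j, ∀ x ∈ p i, ∀ y ∈ q j, f (x ⊗ₜ y) = g (x ⊗ₜ y)) : f = g :=
  TensorProduct.ext <| LinearMap.ext_of_iSup_eq_top hp fun i x hx =>
    LinearMap.ext_of_iSup_eq_top hq fun j y hy => h i j x hx y hy

end Ext

theorem stmt_18_general {k : Type*} [CommRing k] {G : Type*} [Group G]
    {V : Type*} [AddCommGroup V] [Module k V]
    (𝒱 : ZMod 2 → Submodule k V)
    (hV : DirectSum.IsInternal 𝒱)
    (ξ : G → ZMod 2)
    (ρV : G → LinearMap.GeneralLinearGroup k V)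
    (hgrV : ∀ (g : G) (i : ZMod 2), ∀ v ∈ 𝒱 i, (ρV g : V →ₗ[k] V) v ∈ 𝒱 (i + ξ g))
    (ρ : G → (V ⊗[k] V →ₗ[k] V ⊗[k] V))
    (hρ : ∀ (g : G) (u : V) (j : ZMod 2), ∀ v ∈ 𝒱 j,
      ρ g (u ⊗ₜ[k] v) =
        ((-1 : k) ^ (ξ g * j).val) •
          (((ρV g : V →ₗ[k] V) u) ⊗ₜ[k] ((ρV g : V →ₗ[k] V) v)))
    (τ : V ⊗[k] V →ₗ[k] V ⊗[k] V)
    (hτ : ∀ (i j : ZMod 2), ∀ u ∈ 𝒱 i, ∀ v ∈ 𝒱 j,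
      τ (u ⊗ₜ[k] v) = ((-1 : k) ^ (i * j).val) • (v ⊗ₜ[k] u)) :
    ∀ g : G, (ρ g) ∘ₗ τ = ((-1 : k) ^ (ξ g).val) • (τ ∘ₗ (ρ g)) := by
  intro g
  have hspan : ⨆ i, 𝒱 i = ⊤ := hV.submodule_iSup_eq_top
  refine TensorProduct.ext_of_iSup_eq_top hspan hspan fun i j u hu v hv => ?_
  simp only [LinearMap.comp_apply, LinearMap.smul_apply]
  rw [hτ i j u hu v hv, map_smul, hρ g v i u hu, hρ g u j v hv, map_smul,
    hτ (i + ξ g) (j + ξ g) _ (hgrV g i u hu) _ (hgrV g j v hv)]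
  simp only [smul_smul, ← neg_one_pow_zmod_two_val_add]
  rw [koszul_exponent_identity i j (ξ g)]

/-- For a super projective representation `ρ_V` of `G` with multiplier `γ` shifting the
ℤ/2ℤ-grading by the homomorphism `ξ`, the induced map `ρ(g)` on `V ⊗ V` (with the Koszul
sign `(−1)^{ξ(g)·j}`) commutes with the signed transposition `τ` up to the sign
`(−1)^{ξ(g)}`: `ρ(g) ∘ τ = (−1)^{ξ(g)}·(τ ∘ ρ(g))`. -/
theorem stmt_18 {k : Type*} [CommRing k] {G : Type*} [Group G]
    {V : Type*} [AddCommGroup V] [Module k V]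
    (𝒱 : ZMod 2 → Submodule k V)
    (hV : DirectSum.IsInternal 𝒱)
    (γ : G → G → kˣ) (ξ : G → ZMod 2)
    (hξ : ∀ f g : G, ξ (f * g) = ξ f + ξ g)
    (ρV : G → LinearMap.GeneralLinearGroup k V)
    (hρV : ∀ f g : G, (ρV f : V →ₗ[k] V) ∘ₗ (ρV g : V →ₗ[k] V) =
      (γ f g : k) • (ρV (f * g) : V →ₗ[k] V))
    (hgrV : ∀ (g : G) (i : ZMod 2), ∀ v ∈ 𝒱 i, (ρV g : V →ₗ[k] V) v ∈ 𝒱 (i + ξ g))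
    (ρ : G → (V ⊗[k] V →ₗ[k] V ⊗[k] V))
    (hρ : ∀ (g : G) (u : V) (j : ZMod 2), ∀ v ∈ 𝒱 j,
      ρ g (u ⊗ₜ[k] v) =
        ((-1 : k) ^ (ξ g * j).val) •
          (((ρV g : V →ₗ[k] V) u) ⊗ₜ[k] ((ρV g : V →ₗ[k] V) v)))
    (τ : V ⊗[k] V →ₗ[k] V ⊗[k] V)
    (hτ : ∀ (i j : ZMod 2), ∀ u ∈ 𝒱 i, ∀ v ∈ 𝒱 j,
      τ (u ⊗ₜ[k] v) = ((-1 : k) ^ (i * j).val) • (v ⊗ₜ[k] u)) :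
    ∀ g : G, (ρ g) ∘ₗ τ = ((-1 : k) ^ (ξ g).val) • (τ ∘ₗ (ρ g)) :=
  stmt_18_general 𝒱 hV ξ ρV hgrV ρ hρ τ hτ
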